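/- arXiv:2507.23423 — 2 statements merged into one kernel-verified Lean document; each statement's English description precedes it below -/
import Mathlib

section
/- Let g be an M♮-convex function with finite nonempty effective domain and let b : E → {0,1}. Let x ∈ dom g and suppose there exists y ∈ dom g with ⟨b,y⟩ = ⟨b,x⟩ − 1. Then there exists a transition with respect to x, i.e., a pair (u,v) with u ∈ E_1 and v ∈ E_0 ∪ {z} such that x − χ_u + χ_v ∈ dom g. -/
open scoped BigOperators

/-- Characteristic vector of a singleton `{u}`. -/
def chiv {E : Type*} [DecidableEq E] (u : E) : E → ℤ := fun e => if e = u then 1 else 0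

/-- Characteristic vector allowing the dummy symbol `z` (modelled as `none`), with `χ_z = 0`. -/
def chiOpt {E : Type*} [DecidableEq E] (v : Option E) : E → ℤ :=
  fun e => match v with
  | none => 0
  | some w => chiv w e

/-- M♮-convexity (with nonempty effective domain) for `g : (E → ℤ) → ℝ ∪ {+∞}`. -/
def MnatConvex {E : Type*} [DecidableEq E] (g : (E → ℤ) → WithTop ℝ) : Prop :=
  (∃ x, g x < ⊤) ∧
  ∀ x y : E → ℤ, g x < ⊤ → g y < ⊤ → ∀ u : E, y u < x u →
    (g (x - chiv u) + g (y + chiv u) ≤ g x + g y) ∨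
    (∃ v : E, x v < y v ∧
      g (x - chiv u + chiv v) + g (y + chiv u - chiv v) ≤ g x + g y)

/-- `⟨b,x⟩ = ∑ e, b e * x e`. -/
def innerb {E : Type*} [Fintype E] (b : E → ℤ) (x : E → ℤ) : ℤ := ∑ e, b e * x e

/-- `𝒯_i`: the minimizers of `g` on `𝒫_i = {x ∈ dom g : ⟨b,x⟩ = i}`. -/
def Tset {E : Type*} [Fintype E] (g : (E → ℤ) → WithTop ℝ) (b : E → ℤ) (i : ℤ) :
    Set (E → ℤ) :=
  {x | g x < ⊤ ∧ innerb b x = i ∧ ∀ y : E → ℤ, g y < ⊤ → innerb b y = i → g x ≤ g y}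

/-- A transition `(u,v)` with respect to `x`: `u ∈ E₁`, `v ∈ E₀ ∪ {z}`, and
`x - χ_u + χ_v ∈ dom g`. -/
def IsTransition {E : Type*} [DecidableEq E] (g : (E → ℤ) → WithTop ℝ) (b : E → ℤ)
    (x : E → ℤ) (u : E) (v : Option E) : Prop :=
  b u = 1 ∧ (∀ w : E, v = some w → b w = 0) ∧ g (x - chiv u + chiOpt v) < ⊤

/-- The cost `g(x;u,v) = g(x - χ_u + χ_v) - g(x)` of a transition (as a real number;
both values are finite for transitions with respect to `x ∈ dom g`). -/
noncomputable def transCost {E : Type*} [DecidableEq E] (g : (E → ℤ) → WithTop ℝ)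
    (x : E → ℤ) (u : E) (v : Option E) : ℝ :=
  (g (x - chiv u + chiOpt v)).untopD 0 - (g x).untopD 0

/-- A minimum transition with respect to `x`. -/
def IsMinTransition {E : Type*} [Fintype E] [DecidableEq E] (g : (E → ℤ) → WithTop ℝ)
    (b : E → ℤ) (x : E → ℤ) (u : E) (v : Option E) : Prop :=
  IsTransition g b x u v ∧
    ∀ (u' : E) (v' : Option E), IsTransition g b x u' v' →
      transCost g x u v ≤ transCost g x u' v'


/-! Take `u ∈ E₁` with `y u < x u`, which exists because `⟨b, y⟩ < ⟨b, x⟩`, and apply the exchange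
axiom to `x`, `y`, `u`. Either `x - χ_u ∈ dom g`, or some `v` with `x v < y v` has
`x - χ_u + χ_v ∈ dom g`; both are transitions unless `v ∈ E₁`. In that case
`y' = y + χ_u - χ_v ∈ dom g` still satisfies `⟨b, y'⟩ = ⟨b, x⟩ - 1` and is strictly closer to `x`
in ℓ¹-distance, so we conclude by induction on that distance. -/

open Finset

section Exchange

variable {E : Type*}

theorem chiOpt_none [DecidableEq E] : chiOpt (none : Option E) = 0 := rfl

theorem innerb_add [Fintype E] (b x y : E → ℤ) : innerb b (x + y) = innerb b x + innerb b y := by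
  simp only [innerb, Pi.add_apply, mul_add, sum_add_distrib]

theorem innerb_sub [Fintype E] (b x y : E → ℤ) : innerb b (x - y) = innerb b x - innerb b y := by
  simp only [innerb, Pi.sub_apply, mul_sub, sum_sub_distrib]

theorem innerb_chiv [Fintype E] [DecidableEq E] (b : E → ℤ) (u : E) :
    innerb b (chiv u) = b u := by
  simp [innerb, chiv]

theorem exists_pos_lt_of_innerb_lt [Fintype E] {b x y : E → ℤ} (hb : ∀ e, 0 ≤ b e)
    (h : innerb b y < innerb b x) : ∃ u, 0 < b u ∧ y u < x u := by
  by_contra! hcon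
  have hle : innerb b x ≤ innerb b y :=
    sum_le_sum fun e _ => by
      rcases (hb e).eq_or_lt with h0 | hpos
      · simp [← h0]
      · exact mul_le_mul_of_nonneg_left (hcon e hpos) (hb e)
  omega

def l1Dist [Fintype E] (x y : E → ℤ) : ℕ := ∑ e, (x e - y e).natAbs

theorem l1Dist_exchange_lt [Fintype E] [DecidableEq E] {x y : E → ℤ} {u v : E}
    (hu : y u < x u) (hv : x v < y v) : l1Dist x (y + chiv u - chiv v) < l1Dist x y := by
  refine sum_lt_sum (fun e _ => ?_) ⟨u, mem_univ u, ?_⟩ <;>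
    simp only [Pi.add_apply, Pi.sub_apply, chiv] <;> split_ifs <;> subst_vars <;> omega

theorem lt_top_of_add_le_add {a b c d : WithTop ℝ} (h : a + b ≤ c + d) (hc : c < ⊤)
    (hd : d < ⊤) : a < ⊤ ∧ b < ⊤ :=
  WithTop.add_lt_top.1 (h.trans_lt (WithTop.add_lt_top.2 ⟨hc, hd⟩))

theorem MnatConvex.exchange_mem_dom [DecidableEq E] {g : (E → ℤ) → WithTop ℝ}
    (hg : MnatConvex g) {x y : E → ℤ} (hx : g x < ⊤) (hy : g y < ⊤) {u : E} (hu : y u < x u) :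
    g (x - chiv u) < ⊤ ∨
      ∃ v, x v < y v ∧ g (x - chiv u + chiv v) < ⊤ ∧ g (y + chiv u - chiv v) < ⊤ := by
  rcases hg.2 x y hx hy u hu with h | ⟨v, hv, h⟩
  · exact Or.inl (lt_top_of_add_le_add h hx hy).1
  · exact Or.inr ⟨v, hv, lt_top_of_add_le_add h hx hy⟩

theorem exists_transition_or_closer [Fintype E] [DecidableEq E] {g : (E → ℤ) → WithTop ℝ}
    {b : E → ℤ} (hg : MnatConvex g) (hb : ∀ e : E, b e = 0 ∨ b e = 1) {x y : E → ℤ}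
    (hx : g x < ⊤) (hy : g y < ⊤) (hby : innerb b y = innerb b x - 1) :
    (∃ (u : E) (v : Option E), IsTransition g b x u v) ∨
      ∃ y', g y' < ⊤ ∧ innerb b y' = innerb b x - 1 ∧ l1Dist x y' < l1Dist x y := by
  have hb_nonneg : ∀ e, 0 ≤ b e := fun e => by rcases hb e with h | h <;> omega
  have hlt : innerb b y < innerb b x := by omega
  obtain ⟨u, hbu_pos, hu⟩ := exists_pos_lt_of_innerb_lt hb_nonneg hlt
  have hbu : b u = 1 := (hb u).resolve_left hbu_pos.ne'
  rcases hg.exchange_mem_dom hx hy hu with hdom | ⟨v, hv, hdom, hdom'⟩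
  · exact Or.inl ⟨u, none, hbu, by simp, by rwa [chiOpt_none, add_zero]⟩
  rcases hb v with hbv | hbv
  · exact Or.inl ⟨u, some v, hbu, by simp [hbv], hdom⟩
  · refine Or.inr ⟨_, hdom', ?_, l1Dist_exchange_lt hu hv⟩
    rw [innerb_sub, innerb_add, innerb_chiv, innerb_chiv, hby, hbu, hbv]
    ring

end Exchange

theorem stmt_2_general {E : Type*} [Fintype E] [DecidableEq E]
    (g : (E → ℤ) → WithTop ℝ) (b : E → ℤ)
    (hg : MnatConvex g)
    (hb : ∀ e : E, b e = 0 ∨ b e = 1)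
    (x : E → ℤ) (hx : g x < ⊤)
    (y : E → ℤ) (hy : g y < ⊤) (hby : innerb b y = innerb b x - 1) :
    ∃ (u : E) (v : Option E), IsTransition g b x u v := by
  induction hn : l1Dist x y using Nat.strong_induction_on generalizing y with
  | _ n ih =>
    rcases exists_transition_or_closer hg hb hx hy hby with htrans | ⟨y', hy', hby', hclose⟩
    · exact htrans
    · exact ih _ (hn ▸ hclose) y' hy' hby' rfl

/-- if `x ∈ dom g` and some `y ∈ dom g` has `⟨b,y⟩ = ⟨b,x⟩ - 1`,
then there exists a transition with respect to `x`. -/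
theorem stmt_2 {E : Type*} [Fintype E] [DecidableEq E] [Nonempty E]
    (g : (E → ℤ) → WithTop ℝ) (b : E → ℤ)
    (hg : MnatConvex g)
    (hfin : {x : E → ℤ | g x < ⊤}.Finite)
    (hb : ∀ e : E, b e = 0 ∨ b e = 1)
    (x : E → ℤ) (hx : g x < ⊤)
    (y : E → ℤ) (hy : g y < ⊤) (hby : innerb b y = innerb b x - 1) :
    ∃ (u : E) (v : Option E), IsTransition g b x u v :=
  stmt_2_general g b hg hb x hx y hy hby
end

section
/- Let g be an M♮-convex function with finite nonempty effective domain and let b : E → {0,1}. Let {x_k}_{k=k̲}^{k̄} be a sequence such that x_k ∈ 𝒯_k for all k and, for each k ∈ {k̲+1, …, k̄}, x_{k−1} = x_k − χ_{u_k} + χ_{v_k} for some minimum transition (u_k, v_k) with respect to x_k. Assume k̲ + 2 ≤ k̄. If there exists an index j ∈ {k̲+1, …, k̄} such that g(x_j) < g(x_{j−1}), then g(x_i) < g(x_{i−1}) for all i ∈ {k̲+1, …, j}. -/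
open scoped BigOperators

/-!
Write `m k` for the minimum of `g` on the level `⟨b,x⟩ = k`. The whole content is that
`k ↦ m k` is discretely convex, `2 m k ≤ m (k+1) + m (k-1)`: then the increments
`m k - m (k-1)` are nondecreasing in `k`, so a negative increment at `j` forces negative
increments at every `i ≤ j`.

For the convexity, take minimizers `X` on level `k+1` and `Y` on level `k-1`, with `X` as close
to `Y` in `ℓ¹` as possible. Since `⟨b,X⟩ > ⟨b,Y⟩` there is `u ∈ E₁` with `Y u < X u`, and the
exchange axiom at `u` moves both points to level `k`, unless it exchanges `u` against some
`v ∈ E₁`; but then `X - χ_u + χ_v` is again a minimizer on level `k+1`, closer to `Y`.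
-/

lemma WithTop.lt_top_of_add_le {α : Type*} [Add α] [Preorder α] {a a' c c' : WithTop α}
    (h : a' + c' ≤ a + c) (ha : a < ⊤) (hc : c < ⊤) :
    a' < ⊤ ∧ c' < ⊤ :=
  WithTop.add_lt_top.1 (h.trans_lt (WithTop.add_lt_top.2 ⟨ha, hc⟩))

section LevelMinimizers

variable {E : Type*} [Fintype E] {g : (E → ℤ) → WithTop ℝ} {b : E → ℤ}

lemma exists_lt_of_innerb_lt (hb : ∀ e, b e = 0 ∨ b e = 1) {X Y : E → ℤ}
    (h : innerb b Y < innerb b X) : ∃ u, b u = 1 ∧ Y u < X u := by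
  obtain ⟨u, -, hu⟩ := Finset.exists_lt_of_sum_lt h
  rcases hb u with hbu | hbu <;> rw [hbu] at hu
  · simp at hu
  · exact ⟨u, hbu, by simpa using hu⟩

lemma eq_of_mem_Tset {k : ℤ} {x y : E → ℤ} (hx : x ∈ Tset g b k) (hy : y ∈ Tset g b k) :
    g x = g y :=
  le_antisymm (hx.2.2 y hy.1 hy.2.1) (hy.2.2 x hx.1 hx.2.1)

lemma mem_Tset_of_le {k : ℤ} {x y : E → ℤ} (hx : x ∈ Tset g b k) (hyx : g y ≤ g x)
    (hy : innerb b y = k) : y ∈ Tset g b k :=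
  ⟨hyx.trans_lt hx.1, hy, fun z hz hzk => hyx.trans (hx.2.2 z hz hzk)⟩

variable [DecidableEq E]

lemma innerb_add_chiv (b y : E → ℤ) (w : E) : innerb b (y + chiv w) = innerb b y + b w := by
  simp only [innerb, chiv, Pi.add_apply, mul_add, Finset.sum_add_distrib, mul_ite, mul_one,
    mul_zero, Finset.sum_ite_eq', Finset.mem_univ, if_true]

lemma innerb_sub_chiv (b y : E → ℤ) (w : E) : innerb b (y - chiv w) = innerb b y - b w := by
  simp only [innerb, chiv, Pi.sub_apply, mul_sub, Finset.sum_sub_distrib, mul_ite, mul_one,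
    mul_zero, Finset.sum_ite_eq', Finset.mem_univ, if_true]

lemma sum_abs_sub_exchange_lt {X Y : E → ℤ} {u v : E} (hu : Y u < X u) (hv : X v < Y v) :
    ∑ e, |(X - chiv u + chiv v) e - Y e| < ∑ e, |X e - Y e| := by
  have huv : u ≠ v := by rintro rfl; omega
  apply Finset.sum_lt_sum
  · intro e _
    simp only [chiv, Pi.add_apply, Pi.sub_apply]
    split_ifs <;> grind
  · exact ⟨u, Finset.mem_univ u, by simp only [chiv, Pi.add_apply, Pi.sub_apply]; grind⟩

lemma MnatConvex.exists_exchange_to_level (hg : MnatConvex g) (hb : ∀ e, b e = 0 ∨ b e = 1)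
    {k : ℤ} {X Y : E → ℤ} (hX : X ∈ Tset g b (k + 1)) (hY : Y ∈ Tset g b (k - 1))
    (hclosest : ∀ X' ∈ Tset g b (k + 1), ∑ e, |X e - Y e| ≤ ∑ e, |X' e - Y e|) :
    ∃ X' Y', innerb b X' = k ∧ innerb b Y' = k ∧ g X' + g Y' ≤ g X + g Y := by
  have hlevel : innerb b Y < innerb b X := by rw [hX.2.1, hY.2.1]; omega
  obtain ⟨u, hbu, hu⟩ := exists_lt_of_innerb_lt hb hlevel
  rcases hg.2 X Y hX.1 hY.1 u hu with hle | ⟨v, hv, hle⟩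
  · exact ⟨_, _, by rw [innerb_sub_chiv, hX.2.1, hbu]; ring,
      by rw [innerb_add_chiv, hY.2.1, hbu]; ring, hle⟩
  rcases hb v with hbv | hbv
  · exact ⟨_, _, by rw [innerb_add_chiv, innerb_sub_chiv, hX.2.1, hbu, hbv]; ring,
      by rw [innerb_sub_chiv, innerb_add_chiv, hY.2.1, hbu, hbv]; ring, hle⟩
  exfalso
  obtain ⟨hX'top, hY'top⟩ := WithTop.lt_top_of_add_le hle hX.1 hY.1
  have hY' : g Y ≤ g (Y + chiv u - chiv v) :=
    hY.2.2 _ hY'top (by rw [innerb_sub_chiv, innerb_add_chiv, hY.2.1, hbu, hbv]; ring)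
  have hX' : X - chiv u + chiv v ∈ Tset g b (k + 1) := by
    refine mem_Tset_of_le hX ?_ (by rw [innerb_add_chiv, innerb_sub_chiv, hX.2.1, hbu, hbv]; ring)
    exact (WithTop.add_le_add_iff_right hY.1.ne).1 ((add_le_add_right hY' _).trans hle)
  exact (hclosest _ hX').not_gt (sum_abs_sub_exchange_lt hu hv)

lemma MnatConvex.add_self_le_of_mem_Tset (hg : MnatConvex g) (hfin : {x | g x < ⊤}.Finite)
    (hb : ∀ e, b e = 0 ∨ b e = 1) {k : ℤ} {m X₀ Y : E → ℤ} (hm : m ∈ Tset g b k)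
    (hX₀ : X₀ ∈ Tset g b (k + 1)) (hY : Y ∈ Tset g b (k - 1)) :
    g m + g m ≤ g X₀ + g Y := by
  obtain ⟨X, hX, hclosest⟩ :=
    Set.exists_min_image (Tset g b (k + 1)) (fun X => ∑ e, |X e - Y e|)
      (hfin.subset fun _ h => h.1) ⟨X₀, hX₀⟩
  obtain ⟨X', Y', hX'k, hY'k, hle⟩ := hg.exists_exchange_to_level hb hX hY hclosest
  obtain ⟨hX'top, hY'top⟩ := WithTop.lt_top_of_add_le hle hX.1 hY.1
  calc g m + g m ≤ g X' + g Y' := add_le_add (hm.2.2 _ hX'top hX'k) (hm.2.2 _ hY'top hY'k)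
    _ ≤ g X + g Y := hle
    _ = g X₀ + g Y := by rw [eq_of_mem_Tset hX hX₀]

end LevelMinimizers

lemma sub_pred_le_sub_pred_of_add_self_le {r : ℤ → ℝ} {a c : ℤ}
    (hr : ∀ k, a < k → k < c → r k + r k ≤ r (k + 1) + r (k - 1)) {i : ℤ} (hi : a < i) :
    ∀ j, i ≤ j → j ≤ c → r i - r (i - 1) ≤ r j - r (j - 1) := by
  intro j hij
  induction j, hij using Int.leInduction with
  | base => exact fun _ => le_rfl
  | succ j hij ih =>
    intro hjc
    have := hr j (by omega) (by omega)
    rw [add_sub_cancel_right]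
    linarith [ih (by omega)]

theorem stmt_6_general {E : Type*} [Fintype E] [DecidableEq E]
    (g : (E → ℤ) → WithTop ℝ) (b : E → ℤ)
    (hg : MnatConvex g)
    (hfin : {x : E → ℤ | g x < ⊤}.Finite)
    (hb : ∀ e : E, b e = 0 ∨ b e = 1)
    (kmin kmax : ℤ)
    (x : ℤ → (E → ℤ))
    (hxk : ∀ k : ℤ, kmin ≤ k → k ≤ kmax → x k ∈ Tset g b k)
    (j : ℤ) (hj2 : j ≤ kmax)
    (hgj : g (x j) < g (x (j - 1))) :
    ∀ i : ℤ, kmin + 1 ≤ i → i ≤ j → g (x i) < g (x (i - 1)) := by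
  intro i hi hij
  set r : ℤ → ℝ := fun k => (g (x k)).untop₀
  have hr : ∀ k, kmin ≤ k → k ≤ kmax → g (x k) = r k := fun k h₁ h₂ =>
    (WithTop.coe_untop₀_of_ne_top (hxk k h₁ h₂).1.ne).symm
  have hconv : ∀ k, kmin < k → k < kmax → r k + r k ≤ r (k + 1) + r (k - 1) := by
    intro k h₁ h₂
    have := hg.add_self_le_of_mem_Tset hfin hb (hxk k (by omega) (by omega))
      (hxk (k + 1) (by omega) (by omega)) (hxk (k - 1) (by omega) (by omega))
    rwa [hr k (by omega) (by omega), hr (k + 1) (by omega) (by omega),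
      hr (k - 1) (by omega) (by omega), ← WithTop.coe_add, ← WithTop.coe_add,
      WithTop.coe_le_coe] at this
  have hincr := sub_pred_le_sub_pred_of_add_self_le hconv (by omega : kmin < i) j hij hj2
  rw [hr j (by omega) hj2, hr (j - 1) (by omega) (by omega), WithTop.coe_lt_coe] at hgj
  rw [hr i (by omega) (by omega), hr (i - 1) (by omega) (by omega), WithTop.coe_lt_coe]
  linarith

/-- along a sequence generated by minimum transitions, once the
objective `g` strictly increases (as `k` decreases), it keeps strictly increasing. -/
theorem stmt_6 {E : Type*} [Fintype E] [DecidableEq E] [Nonempty E]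
    (g : (E → ℤ) → WithTop ℝ) (b : E → ℤ)
    (hg : MnatConvex g)
    (hfin : {x : E → ℤ | g x < ⊤}.Finite)
    (hb : ∀ e : E, b e = 0 ∨ b e = 1)
    (kmin kmax : ℤ)
    (hkmin : (Tset g b kmin).Nonempty ∧ ∀ k : ℤ, (Tset g b k).Nonempty → kmin ≤ k)
    (hkmax : (Tset g b kmax).Nonempty ∧ ∀ k : ℤ, (Tset g b k).Nonempty → k ≤ kmax)
    (x : ℤ → (E → ℤ))
    (hxk : ∀ k : ℤ, kmin ≤ k → k ≤ kmax → x k ∈ Tset g b k)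
    (hstep : ∀ k : ℤ, kmin + 1 ≤ k → k ≤ kmax →
      ∃ (u : E) (v : Option E), IsMinTransition g b (x k) u v ∧
        x (k - 1) = x k - chiv u + chiOpt v)
    (hgap : kmin + 2 ≤ kmax)
    (j : ℤ) (hj1 : kmin + 1 ≤ j) (hj2 : j ≤ kmax)
    (hgj : g (x j) < g (x (j - 1))) :
    ∀ i : ℤ, kmin + 1 ≤ i → i ≤ j → g (x i) < g (x (i - 1)) :=
  stmt_6_general g b hg hfin hb kmin kmax x hxk j hj2 hgj
end
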